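/- arXiv:2512.08770 — 7 statements merged into one kernel-verified Lean document; each statement's English description precedes it below -/
import Mathlib

section
/- Let Assumption 1 hold and take μ(v) = Σ_i v_i. Let δ be the optimal value of problem (MD) and let δ̃ be the optimal value of problem (MD'). Then δ̃ = δ, and moreover the (x, y) components of the solution sets coincide: if (x, y, w) attains the infimum of (MD') then (x, y) attains the infimum of (MD), and if (x, y) attains the infimum of (MD) then (x, y, Σ_i g_i*(x)) attains the infimum of (MD'). -/
/-!
Statement 2 (Proposition 2 of the paper): under Assumption 1 and with μ(v) = Σᵢ vᵢ,
problems (MD) and (MD') have the same optimal value δ = δ̃, and the (x,y) components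
of their solution sets coincide.
-/

theorem md_alt_equivalence
    (n₀ m : ℕ) (n : Fin m → ℕ)
    (F : ∀ i : Fin m, Set ((Fin n₀ → ℝ) × (Fin (n i) → ℝ)))
    (g : ∀ i : Fin m, (Fin n₀ → ℝ) → (Fin (n i) → ℝ) → ℝ)
    (G : Set ((Fin n₀ → ℝ) × (∀ i, Fin (n i) → ℝ)))
    (gstar : ∀ _ : Fin m, (Fin n₀ → ℝ) → EReal)
    (hgstar : ∀ i x, gstar i x =
      ⨅ yi : {yi : Fin (n i) → ℝ // (x, yi) ∈ F i}, ((g i x yi.1 : ℝ) : EReal))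
    (Fhat : Set ((Fin n₀ → ℝ) × (∀ i, Fin (n i) → ℝ)))
    (hFhat : Fhat = {p | ∀ i, (p.1, p.2 i) ∈ F i})
    -- Assumption 1: gᵢ*(x) > −∞ for every i and every x ∈ π₀(F̂ ∩ G)
    (hA1 : ∀ i : Fin m, ∀ x : Fin n₀ → ℝ,
      (∃ y : ∀ i, Fin (n i) → ℝ, (x, y) ∈ Fhat ∩ G) → ⊥ < gstar i x)
    -- objective of (MD) with μ(v) = Σᵢ vᵢ
    (MDobj : ((Fin n₀ → ℝ) × (∀ i, Fin (n i) → ℝ)) → EReal)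
    (hMDobj : ∀ p, MDobj p = ∑ i, (((g i p.1 (p.2 i) : ℝ) : EReal) - gstar i p.1))
    -- optimal value δ of (MD)
    (δ : EReal)
    (hδ : δ = sInf (MDobj '' (Fhat ∩ G)))
    -- feasible set and objective of (MD')
    (MDfeas' : Set (((Fin n₀ → ℝ) × (∀ i, Fin (n i) → ℝ)) × ℝ))
    (hMDfeas' : MDfeas' = {q | q.1 ∈ Fhat ∩ G ∧
      ∀ y' : ∀ i, Fin (n i) → ℝ, (q.1.1, y') ∈ Fhat → q.2 ≤ ∑ i, g i q.1.1 (y' i)})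
    (MDobj' : (((Fin n₀ → ℝ) × (∀ i, Fin (n i) → ℝ)) × ℝ) → EReal)
    (hMDobj' : ∀ q, MDobj' q = (((∑ i, g i q.1.1 (q.1.2 i)) - q.2 : ℝ) : EReal))
    -- optimal value δ̃ of (MD')
    (δt : EReal)
    (hδt : δt = sInf (MDobj' '' MDfeas')) :
    -- conclusion: equal optimal values, and matching solution sets
    δt = δ ∧
    (∀ q ∈ MDfeas', MDobj' q = δt → (q.1 ∈ Fhat ∩ G ∧ MDobj q.1 = δ)) ∧
    (∀ p ∈ Fhat ∩ G, MDobj p = δ →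
      ((p, ∑ i, (gstar i p.1).toReal) ∈ MDfeas' ∧
        MDobj' (p, ∑ i, (gstar i p.1).toReal) = δt)) := by
  -- coercion of finite sums into EReal
  have coeSum : ∀ (f : Fin m → ℝ), ((∑ i, f i : ℝ) : EReal) = ∑ i, (f i : EReal) :=
    fun f => map_sum (⟨⟨Real.toEReal, EReal.coe_zero⟩, EReal.coe_add⟩ : ℝ →+ EReal) f Finset.univ
  -- gstar is a lower bound for g on the feasible set
  have hle : ∀ (x : Fin n₀ → ℝ) (y' : ∀ i, Fin (n i) → ℝ), (x, y') ∈ Fhat →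
      ∀ i, gstar i x ≤ ((g i x (y' i) : ℝ) : EReal) := by
    intro x y' hy' i
    rw [hgstar]
    rw [hFhat] at hy'
    exact iInf_le (fun yi : {yi : Fin (n i) → ℝ // (x, yi) ∈ F i} =>
      ((g i x yi.1 : ℝ) : EReal)) ⟨y' i, hy' i⟩
  -- at feasible points, gstar is a real number
  have hreal : ∀ p, p ∈ Fhat ∩ G → ∀ i,
      gstar i p.1 = (((gstar i p.1).toReal : ℝ) : EReal) := by
    intro p hp i
    have hbot : gstar i p.1 ≠ ⊥ := (hA1 i p.1 ⟨p.2, hp⟩).ne'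
    have htop : gstar i p.1 ≠ ⊤ :=
      ((hle p.1 p.2 hp.1 i).trans_lt (EReal.coe_lt_top _)).ne
    exact (EReal.coe_toReal htop hbot).symm
  -- real-valued lower bound for g
  have hleR : ∀ p, p ∈ Fhat ∩ G → ∀ (y' : ∀ i, Fin (n i) → ℝ), (p.1, y') ∈ Fhat →
      ∀ i, (gstar i p.1).toReal ≤ g i p.1 (y' i) := by
    intro p hp y' hy' i
    have h := hle p.1 y' hy' i
    rw [hreal p hp i] at h
    exact_mod_cast h
  -- value of MDobj at feasible points as a real number
  have hMDval : ∀ p, p ∈ Fhat ∩ G →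
      MDobj p = (((∑ i, g i p.1 (p.2 i)) - ∑ i, (gstar i p.1).toReal : ℝ) : EReal) := by
    intro p hp
    rw [hMDobj]
    have step : ∀ i : Fin m, (((g i p.1 (p.2 i) : ℝ) : EReal) - gstar i p.1)
        = ((g i p.1 (p.2 i) - (gstar i p.1).toReal : ℝ) : EReal) := by
      intro i
      conv_lhs => rw [hreal p hp i]
      rw [← EReal.coe_sub]
    calc ∑ i, (((g i p.1 (p.2 i) : ℝ) : EReal) - gstar i p.1)
        = ∑ i, ((g i p.1 (p.2 i) - (gstar i p.1).toReal : ℝ) : EReal) := by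
          exact Finset.sum_congr rfl fun i _ => step i
      _ = ((∑ i, (g i p.1 (p.2 i) - (gstar i p.1).toReal) : ℝ) : EReal) := (coeSum _).symm
      _ = (((∑ i, g i p.1 (p.2 i)) - ∑ i, (gstar i p.1).toReal : ℝ) : EReal) := by
          rw [Finset.sum_sub_distrib]
  -- any feasible w in (MD') is at most ∑ gstar
  have hwle : ∀ q, q ∈ MDfeas' → q.2 ≤ ∑ i, (gstar i q.1.1).toReal := by
    intro q hq
    rw [hMDfeas'] at hq
    obtain ⟨hq1, hq2⟩ := hq
    by_contra hcon
    push_neg at hcon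
    set S := ∑ i, (gstar i q.1.1).toReal with hS
    set w := q.2 with hw
    set ε := (w - S) / (m + 1) with hε
    have hwS : 0 < w - S := by linarith
    have hm1 : (0:ℝ) < (m:ℝ) + 1 := by positivity
    have hε0 : 0 < ε := div_pos hwS hm1
    have hex : ∀ i, ∃ yi, (q.1.1, yi) ∈ F i ∧ g i q.1.1 yi < (gstar i q.1.1).toReal + ε := by
      intro i
      have h1 : gstar i q.1.1 < (((gstar i q.1.1).toReal + ε : ℝ) : EReal) := by
        conv_lhs => rw [hreal q.1 hq1 i]
        exact_mod_cast lt_add_of_pos_right _ hε0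
      nth_rewrite 1 [hgstar] at h1
      obtain ⟨⟨yi, hyi⟩, hlt⟩ := iInf_lt_iff.mp h1
      exact ⟨yi, hyi, by exact_mod_cast hlt⟩
    choose y' hy' hlt using hex
    have hy'F : (q.1.1, y') ∈ Fhat := by rw [hFhat]; exact hy'
    have h2 := hq2 y' hy'F
    have h3 : ∑ i, g i q.1.1 (y' i) ≤ S + (m:ℝ) * ε := by
      calc ∑ i, g i q.1.1 (y' i) ≤ ∑ i, ((gstar i q.1.1).toReal + ε) :=
            Finset.sum_le_sum fun i _ => (hlt i).le
        _ = S + (m:ℝ) * ε := by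
            rw [Finset.sum_add_distrib, Finset.sum_const, Finset.card_univ,
              Fintype.card_fin, nsmul_eq_mul]
    have h4 : (m:ℝ) * ε < w - S := by
      have : (m:ℝ) * ε < ((m:ℝ) + 1) * ε := by
        apply mul_lt_mul_of_pos_right _ hε0
        linarith
      have heq : ((m:ℝ) + 1) * ε = w - S := by
        rw [hε]; field_simp
      linarith
    linarith
  -- (p, ∑ gstar) is feasible for (MD') and has the same objective value
  have hCfeas : ∀ p, p ∈ Fhat ∩ G → ((p, ∑ i, (gstar i p.1).toReal) ∈ MDfeas') := by
    intro p hp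
    rw [hMDfeas']
    refine ⟨hp, fun y' hy' => ?_⟩
    show ∑ i, (gstar i p.1).toReal ≤ ∑ i, g i p.1 (y' i)
    exact Finset.sum_le_sum fun i _ => hleR p hp y' hy' i
  have hCval : ∀ p, p ∈ Fhat ∩ G →
      MDobj' (p, ∑ i, (gstar i p.1).toReal) = MDobj p := by
    intro p hp
    rw [hMDobj', hMDval p hp]
  -- MDobj' dominates MDobj on the feasible set of (MD')
  have hE : ∀ q, q ∈ MDfeas' → MDobj q.1 ≤ MDobj' q := by
    intro q hq
    have hq1 : q.1 ∈ Fhat ∩ G := by rw [hMDfeas'] at hq; exact hq.1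
    rw [hMDobj' q, hMDval q.1 hq1]
    have := hwle q hq
    exact_mod_cast by linarith
  -- equality of optimal values
  have hδle : δ ≤ δt := by
    rw [hδ, hδt]
    apply le_sInf
    rintro v ⟨q, hq, rfl⟩
    have hq1 : q.1 ∈ Fhat ∩ G := by rw [hMDfeas'] at hq; exact hq.1
    exact le_trans (sInf_le ⟨q.1, hq1, rfl⟩) (hE q hq)
  have hδtle : δt ≤ δ := by
    rw [hδ, hδt]
    apply le_sInf
    rintro v ⟨p, hp, rfl⟩
    exact le_trans (sInf_le ⟨_, hCfeas p hp, rfl⟩) (hCval p hp).le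
  have hEq : δt = δ := le_antisymm hδtle hδle
  refine ⟨hEq, ?_, ?_⟩
  · intro q hq hqopt
    have hq1 : q.1 ∈ Fhat ∩ G := by rw [hMDfeas'] at hq; exact hq.1
    refine ⟨hq1, le_antisymm ?_ ?_⟩
    · calc MDobj q.1 ≤ MDobj' q := hE q hq
        _ = δt := hqopt
        _ = δ := hEq
    · rw [hδ]; exact sInf_le ⟨q.1, hq1, rfl⟩
  · intro p hp hpopt
    refine ⟨hCfeas p hp, ?_⟩
    rw [hCval p hp, hpopt, hEq]
end

section
/- Let Assumption 2 hold. Then (x*, y*, w*) attains the infimum of problem (MND) with optimal value δ^N = 0 if and only if (x*, y*) is a normalized Nash equilibrium. -/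
/-!
Every feasible `(x, y, w)` of (MND) has `w ≤ Σᵢ gᵢ(x, yᵢ)`, because `y` is itself one of the
competing `y'`; so the objective of (MND) is nonnegative. It vanishes exactly when
`w = Σᵢ gᵢ(x, yᵢ)`, and `(x, y, Σᵢ gᵢ(x, yᵢ))` is feasible exactly when `(x, y)` is an NNE, which
then attains `δᴺ = 0`.
-/

section NashDeviation

/- In the theorem, `S` is `F̂ ∩ G`, `Y` is `π₋₀(F̂ ∩ G)`, `v (x, y) y'` is `Σᵢ gᵢ(x, y'ᵢ)` and
`φ (x, y)` is `Σᵢ gᵢ(x, yᵢ)`. -/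

variable {α β : Type*}

def mndFeasible (S : Set α) (Y : Set β) (v : α → β → ℝ) : Set (α × ℝ) :=
  {q | q.1 ∈ S ∧ ∀ y ∈ Y, q.2 ≤ v q.1 y}

def mndObjective (φ : α → ℝ) (q : α × ℝ) : EReal :=
  ((φ q.1 - q.2 : ℝ) : EReal)

variable {S : Set α} {Y : Set β} {v : α → β → ℝ} {φ : α → ℝ}

theorem mndObjective_nonneg (hφ : ∀ z ∈ S, ∃ y ∈ Y, v z y ≤ φ z) {q : α × ℝ}
    (hq : q ∈ mndFeasible S Y v) : 0 ≤ mndObjective φ q := by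
  obtain ⟨y, hy, hyφ⟩ := hφ q.1 hq.1
  exact EReal.coe_nonneg.mpr (sub_nonneg.mpr ((hq.2 y hy).trans hyφ))

theorem mndObjective_eq_zero_iff {q : α × ℝ} : mndObjective φ q = 0 ↔ q.2 = φ q.1 := by
  rw [mndObjective, EReal.coe_eq_zero, sub_eq_zero, eq_comm]

theorem isLeast_mndObjective_image (hφ : ∀ z ∈ S, ∃ y ∈ Y, v z y ≤ φ z) {z : α}
    (hz : (z, φ z) ∈ mndFeasible S Y v) :
    IsLeast (mndObjective φ '' mndFeasible S Y v) 0 := by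
  refine ⟨⟨(z, φ z), hz, mndObjective_eq_zero_iff.mpr rfl⟩, ?_⟩
  rintro _ ⟨q, hq, rfl⟩
  exact mndObjective_nonneg hφ hq

theorem exists_mndMinimizer_zero_iff (hφ : ∀ z ∈ S, ∃ y ∈ Y, v z y ≤ φ z) (z : α) :
    ((∃ w : ℝ, (z, w) ∈ mndFeasible S Y v ∧
        mndObjective φ (z, w) = sInf (mndObjective φ '' mndFeasible S Y v)) ∧
      sInf (mndObjective φ '' mndFeasible S Y v) = 0) ↔
      z ∈ S ∧ ∀ y ∈ Y, φ z ≤ v z y := by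
  constructor
  · rintro ⟨⟨w, hzw, hmin⟩, hzero⟩
    rw [hzero, mndObjective_eq_zero_iff] at hmin
    exact hmin ▸ hzw
  · intro hz
    have hzero := (isLeast_mndObjective_image hφ hz).csInf_eq
    exact ⟨⟨φ z, hz, hzero ▸ mndObjective_eq_zero_iff.mpr rfl⟩, hzero⟩

end NashDeviation

theorem mnd_characterizes_NNE_general
    (n₀ m : ℕ) (n : Fin m → ℕ)
    (g : ∀ i : Fin m, (Fin n₀ → ℝ) → (Fin (n i) → ℝ) → ℝ)
    (G : Set ((Fin n₀ → ℝ) × (∀ i, Fin (n i) → ℝ)))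
    (Fhat : Set ((Fin n₀ → ℝ) × (∀ i, Fin (n i) → ℝ)))
    -- feasible set and objective of (MND)
    (MNDfeas : Set (((Fin n₀ → ℝ) × (∀ i, Fin (n i) → ℝ)) × ℝ))
    (hMNDfeas : MNDfeas = {q | q.1 ∈ Fhat ∩ G ∧
      ∀ y' : ∀ i, Fin (n i) → ℝ, (∃ x', (x', y') ∈ Fhat ∩ G) →
        q.2 ≤ ∑ i, g i q.1.1 (y' i)})
    (MNDobj : (((Fin n₀ → ℝ) × (∀ i, Fin (n i) → ℝ)) × ℝ) → EReal)
    (hMNDobj : ∀ q, MNDobj q = (((∑ i, g i q.1.1 (q.1.2 i)) - q.2 : ℝ) : EReal))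
    -- optimal value δ^N of (MND)
    (δN : EReal)
    (hδN : δN = sInf (MNDobj '' MNDfeas))
    -- the candidate point (x*, y*)
    (p : (Fin n₀ → ℝ) × (∀ i, Fin (n i) → ℝ)) :
    -- some (x*, y*, w*) attains the infimum of (MND) with δ^N = 0 iff (x*, y*) is an NNE
    ((∃ w : ℝ, (p, w) ∈ MNDfeas ∧ MNDobj (p, w) = δN) ∧ δN = 0) ↔
      (p ∈ Fhat ∩ G ∧
        ∀ y' : ∀ i, Fin (n i) → ℝ, (∃ x', (x', y') ∈ Fhat ∩ G) →
          ∑ i, g i p.1 (p.2 i) ≤ ∑ i, g i p.1 (y' i)) := by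
  obtain rfl : MNDobj = mndObjective fun z => ∑ i, g i z.1 (z.2 i) := funext hMNDobj
  subst hMNDfeas hδN
  exact exists_mndMinimizer_zero_iff (Y := {y' | ∃ x', (x', y') ∈ Fhat ∩ G})
    (v := fun z y' => ∑ i, g i z.1 (y' i)) (fun z hz => ⟨z.2, ⟨z.1, hz⟩, le_rfl⟩) p

theorem mnd_characterizes_NNE
    (n₀ m : ℕ) (n : Fin m → ℕ)
    (F : ∀ i : Fin m, Set ((Fin n₀ → ℝ) × (Fin (n i) → ℝ)))
    (g : ∀ i : Fin m, (Fin n₀ → ℝ) → (Fin (n i) → ℝ) → ℝ)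
    (G : Set ((Fin n₀ → ℝ) × (∀ i, Fin (n i) → ℝ)))
    (Fhat : Set ((Fin n₀ → ℝ) × (∀ i, Fin (n i) → ℝ)))
    (hFhat : Fhat = {p | ∀ i, (p.1, p.2 i) ∈ F i})
    -- g^N(x) = inf { Σᵢ gᵢ(x,yᵢ') : y' ∈ π₋₀(F̂ ∩ G) }
    (gN : (Fin n₀ → ℝ) → EReal)
    (hgN : ∀ x, gN x =
      ⨅ y' : {y' : ∀ i, Fin (n i) → ℝ // ∃ x', (x', y') ∈ Fhat ∩ G},
        ((∑ i, g i x (y'.1 i) : ℝ) : EReal))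
    -- Assumption 2: g^N(x) > −∞ for every x ∈ π₀(F̂ ∩ G)
    (hA2 : ∀ x : Fin n₀ → ℝ, (∃ y, (x, y) ∈ Fhat ∩ G) → ⊥ < gN x)
    -- feasible set and objective of (MND)
    (MNDfeas : Set (((Fin n₀ → ℝ) × (∀ i, Fin (n i) → ℝ)) × ℝ))
    (hMNDfeas : MNDfeas = {q | q.1 ∈ Fhat ∩ G ∧
      ∀ y' : ∀ i, Fin (n i) → ℝ, (∃ x', (x', y') ∈ Fhat ∩ G) →
        q.2 ≤ ∑ i, g i q.1.1 (y' i)})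
    (MNDobj : (((Fin n₀ → ℝ) × (∀ i, Fin (n i) → ℝ)) × ℝ) → EReal)
    (hMNDobj : ∀ q, MNDobj q = (((∑ i, g i q.1.1 (q.1.2 i)) - q.2 : ℝ) : EReal))
    -- optimal value δ^N of (MND)
    (δN : EReal)
    (hδN : δN = sInf (MNDobj '' MNDfeas))
    -- the candidate point (x*, y*)
    (p : (Fin n₀ → ℝ) × (∀ i, Fin (n i) → ℝ)) :
    -- some (x*, y*, w*) attains the infimum of (MND) with δ^N = 0 iff (x*, y*) is an NNE
    ((∃ w : ℝ, (p, w) ∈ MNDfeas ∧ MNDobj (p, w) = δN) ∧ δN = 0) ↔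
      (p ∈ Fhat ∩ G ∧
        ∀ y' : ∀ i, Fin (n i) → ℝ, (∃ x', (x', y') ∈ Fhat ∩ G) →
          ∑ i, g i p.1 (p.2 i) ≤ ∑ i, g i p.1 (y' i)) :=
  mnd_characterizes_NNE_general n₀ m n g G Fhat MNDfeas hMNDfeas MNDobj hMNDobj δN hδN p
end

section
/- Let Assumptions 2 and 3 hold, and take μ(v) = max{v_1, …, v_m} in problem (MD). Then for every feasible point (x, y, w) of problem (MND), the point (x, y) is feasible in (MD) and satisfies max_i (g_i(x, y_i) − g_i*(x)) ≤ Σ_i g_i(x, y_i) − w. Consequently δ ≤ δ^N, where δ and δ^N are the optimal values of (MD) and (MND) respectively. -/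
/-!
Statement 7 (Proposition 5 of the paper): under Assumptions 2 and 3, with
μ(v) = max{v₁,…,v_m} in (MD), problem (MND) is a restriction of (MD):
every feasible point of (MND) yields a feasible point of (MD) with smaller
objective value, and δ ≤ δ^N.
-/

theorem mnd_restriction_of_md
    (n₀ m : ℕ) (n : Fin m → ℕ)
    (F : ∀ i : Fin m, Set ((Fin n₀ → ℝ) × (Fin (n i) → ℝ)))
    (g : ∀ i : Fin m, (Fin n₀ → ℝ) → (Fin (n i) → ℝ) → ℝ)
    (G : Set ((Fin n₀ → ℝ) × (∀ i, Fin (n i) → ℝ)))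
    (gstar : ∀ _ : Fin m, (Fin n₀ → ℝ) → EReal)
    (hgstar : ∀ i x, gstar i x =
      ⨅ yi : {yi : Fin (n i) → ℝ // (x, yi) ∈ F i}, ((g i x yi.1 : ℝ) : EReal))
    (Fhat : Set ((Fin n₀ → ℝ) × (∀ i, Fin (n i) → ℝ)))
    (hFhat : Fhat = {p | ∀ i, (p.1, p.2 i) ∈ F i})
    (gN : (Fin n₀ → ℝ) → EReal)
    (hgN : ∀ x, gN x =
      ⨅ y' : {y' : ∀ i, Fin (n i) → ℝ // ∃ x', (x', y') ∈ Fhat ∩ G},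
        ((∑ i, g i x (y'.1 i) : ℝ) : EReal))
    -- Assumption 2: g^N(x) > −∞ for every x ∈ π₀(F̂ ∩ G)
    (hA2 : ∀ x : Fin n₀ → ℝ, (∃ y, (x, y) ∈ Fhat ∩ G) → ⊥ < gN x)
    -- Assumption 3: for every (x,y) ∈ F̂ ∩ G and every j,
    -- { yⱼ' : (x,yⱼ') ∈ Fⱼ } ⊆ πⱼ({ (x',y') ∈ F̂ ∩ G : yᵢ' = yᵢ ∀ i ≠ j })
    (hA3 : ∀ p ∈ Fhat ∩ G, ∀ j : Fin m, ∀ yj' : Fin (n j) → ℝ, (p.1, yj') ∈ F j →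
      ∃ q ∈ Fhat ∩ G, (∀ i, i ≠ j → q.2 i = p.2 i) ∧ q.2 j = yj')
    -- objective of (MD) with μ(v) = max{v₁,…,v_m}
    (MDobj : ((Fin n₀ → ℝ) × (∀ i, Fin (n i) → ℝ)) → EReal)
    (hMDobj : ∀ p, MDobj p = ⨆ i, (((g i p.1 (p.2 i) : ℝ) : EReal) - gstar i p.1))
    -- optimal value δ of (MD)
    (δ : EReal)
    (hδ : δ = sInf (MDobj '' (Fhat ∩ G)))
    -- feasible set and objective of (MND)
    (MNDfeas : Set (((Fin n₀ → ℝ) × (∀ i, Fin (n i) → ℝ)) × ℝ))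
    (hMNDfeas : MNDfeas = {q | q.1 ∈ Fhat ∩ G ∧
      ∀ y' : ∀ i, Fin (n i) → ℝ, (∃ x', (x', y') ∈ Fhat ∩ G) →
        q.2 ≤ ∑ i, g i q.1.1 (y' i)})
    (δN : EReal)
    (hδN : δN = sInf ((fun q => (((∑ i, g i q.1.1 (q.1.2 i)) - q.2 : ℝ) : EReal)) ''
      MNDfeas)) :
    (∀ q ∈ MNDfeas,
      q.1 ∈ Fhat ∩ G ∧
      MDobj q.1 ≤ (((∑ i, g i q.1.1 (q.1.2 i)) - q.2 : ℝ) : EReal)) ∧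
    δ ≤ δN := by
  have key : ∀ q ∈ MNDfeas,
      q.1 ∈ Fhat ∩ G ∧
      MDobj q.1 ≤ (((∑ i, g i q.1.1 (q.1.2 i)) - q.2 : ℝ) : EReal) := by
    intro q hq
    rw [hMNDfeas] at hq
    obtain ⟨hq1, hq2⟩ := hq
    refine ⟨hq1, ?_⟩
    rw [hMDobj]
    apply iSup_le
    intro j
    set x := q.1.1 with hx
    set y := q.1.2 with hy
    have hjF : (x, y j) ∈ F j := by
      have := hq1.1
      rw [hFhat] at this
      exact this j
    have hs : ∀ yj' : Fin (n j) → ℝ, (x, yj') ∈ F j →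
        ((q.2 - ∑ k ∈ Finset.univ.erase j, g k x (y k) : ℝ) : EReal) ≤
          ((g j x yj' : ℝ) : EReal) := by
      intro yj' hyj'
      obtain ⟨q', hq', hq'e, hq'j⟩ := hA3 q.1 hq1 j yj' hyj'
      have hw := hq2 q'.2 ⟨q'.1, hq'⟩
      have hsum : ∑ k, g k x (q'.2 k) =
          (∑ k ∈ Finset.univ.erase j, g k x (y k)) + g j x yj' := by
        rw [← Finset.add_sum_erase _ _ (Finset.mem_univ j), hq'j, add_comm]
        congr 1
        exact Finset.sum_congr rfl fun k hk => by
          rw [hq'e k (Finset.ne_of_mem_erase hk)]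
      rw [hsum] at hw
      exact EReal.coe_le_coe_iff.mpr (by linarith)
    have hlb : ((q.2 - ∑ k ∈ Finset.univ.erase j, g k x (y k) : ℝ) : EReal) ≤
        gstar j x := by
      rw [hgstar]
      exact le_iInf fun yj' => hs yj'.1 yj'.2
    calc ((g j x (y j) : ℝ) : EReal) - gstar j x
        ≤ ((g j x (y j) : ℝ) : EReal) -
            ((q.2 - ∑ k ∈ Finset.univ.erase j, g k x (y k) : ℝ) : EReal) :=
          EReal.sub_le_sub le_rfl hlb
      _ = (((∑ i, g i x (y i)) - q.2 : ℝ) : EReal) := by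
          rw [← EReal.coe_sub]
          congr 1
          have h : ∑ i, g i x (y i) =
              g j x (y j) + ∑ k ∈ Finset.univ.erase j, g k x (y k) :=
            (Finset.add_sum_erase _ _ (Finset.mem_univ j)).symm
          rw [h]; ring
  refine ⟨key, ?_⟩
  rw [hδ, hδN]
  apply le_sInf
  rintro v ⟨q, hq, rfl⟩
  have h := key q hq
  exact le_trans (sInf_le ⟨q.1, h.1, rfl⟩) h.2
end

section
/- Let Assumptions 2 and 3 hold. Then every normalized Nash equilibrium is a generalized Nash equilibrium. -/
/-!
Statement 8 (Theorem 1 of the paper): under Assumptions 2 and 3, every normalized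
Nash equilibrium is a generalized Nash equilibrium.
-/

theorem nne_is_gne
    (n₀ m : ℕ) (n : Fin m → ℕ)
    (F : ∀ i : Fin m, Set ((Fin n₀ → ℝ) × (Fin (n i) → ℝ)))
    (g : ∀ i : Fin m, (Fin n₀ → ℝ) → (Fin (n i) → ℝ) → ℝ)
    (G : Set ((Fin n₀ → ℝ) × (∀ i, Fin (n i) → ℝ)))
    (Fhat : Set ((Fin n₀ → ℝ) × (∀ i, Fin (n i) → ℝ)))
    (hFhat : Fhat = {p | ∀ i, (p.1, p.2 i) ∈ F i})
    (gN : (Fin n₀ → ℝ) → EReal)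
    (hgN : ∀ x, gN x =
      ⨅ y' : {y' : ∀ i, Fin (n i) → ℝ // ∃ x', (x', y') ∈ Fhat ∩ G},
        ((∑ i, g i x (y'.1 i) : ℝ) : EReal))
    -- Assumption 2: g^N(x) > −∞ for every x ∈ π₀(F̂ ∩ G)
    (hA2 : ∀ x : Fin n₀ → ℝ, (∃ y, (x, y) ∈ Fhat ∩ G) → ⊥ < gN x)
    -- Assumption 3
    (hA3 : ∀ p ∈ Fhat ∩ G, ∀ j : Fin m, ∀ yj' : Fin (n j) → ℝ, (p.1, yj') ∈ F j →
      ∃ q ∈ Fhat ∩ G, (∀ i, i ≠ j → q.2 i = p.2 i) ∧ q.2 j = yj')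
    -- the candidate point is an NNE
    (p : (Fin n₀ → ℝ) × (∀ i, Fin (n i) → ℝ))
    (hNNE : p ∈ Fhat ∩ G ∧
      ∀ y' : ∀ i, Fin (n i) → ℝ, (∃ x', (x', y') ∈ Fhat ∩ G) →
        ∑ i, g i p.1 (p.2 i) ≤ ∑ i, g i p.1 (y' i)) :
    -- then it is a GNE
    p ∈ Fhat ∩ G ∧
      ∀ i, ∀ yi' : Fin (n i) → ℝ, (p.1, yi') ∈ F i →
        g i p.1 (p.2 i) ≤ g i p.1 yi' := by
  obtain ⟨hp, hmin⟩ := hNNE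
  refine ⟨hp, fun j yj' hyj' => ?_⟩
  obtain ⟨q, hq, hne, hqj⟩ := hA3 p hp j yj' hyj'
  have hsum : ∑ i, g i p.1 (p.2 i) ≤ ∑ i, g i p.1 (q.2 i) :=
    hmin q.2 ⟨q.1, hq⟩
  have h1 : ∑ i, g i p.1 (p.2 i)
      = (∑ i ∈ Finset.univ.erase j, g i p.1 (p.2 i)) + g j p.1 (p.2 j) := by
    rw [Finset.sum_erase_add]; exact Finset.mem_univ j
  have h2 : ∑ i, g i p.1 (q.2 i)
      = (∑ i ∈ Finset.univ.erase j, g i p.1 (p.2 i)) + g j p.1 yj' := by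
    rw [← hqj, ← Finset.sum_erase_add Finset.univ _ (Finset.mem_univ j)]
    congr 1
    exact Finset.sum_congr rfl fun i hi => by
      rw [hne i (Finset.ne_of_mem_erase hi)]
  rw [h1, h2] at hsum
  linarith
end

section
/- Assume n₀ = Σ_{i=1}^m n_i so the first block of variables splits as x = (x_1, …, x_m) with x_i ∈ ℝ^{n_i}. Assume G = { (x_1, …, x_m, y_1, …, y_m) : x_i = y_i for all i }, and that there exists a set Y ⊆ ℝ^{n_1} × ⋯ × ℝ^{n_m} such that for each i, F_i = { (x_1, …, x_m, y_i) : (x_1, …, x_{i−1}, y_i, x_{i+1}, …, x_m) ∈ Y }. Then Assumption 3 holds: for every (x, y) ∈ F̂ ∩ G and every index j, { y_j' : (x, y_j') ∈ F_j } ⊆ π_j({ (x', y') ∈ F̂ ∩ G : y_i' = y_i for all i ≠ j }). -/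
/-!
Statement 9 (Proposition 6 of the paper): if the game arises from the jointly
constrained case (x is a copy of y, G enforces x = y, and each Fᵢ is obtained from a
common host set Y), then Assumption 3 holds.

Here n₀ = Σᵢ nᵢ, and the first block of variables is represented directly as
x = (x₁,…,x_m) with xᵢ ∈ ℝ^{nᵢ}.
-/

theorem jointly_constrained_implies_assumption3
    (m : ℕ) (n : Fin m → ℕ)
    -- the common host set Y
    (Y : Set (∀ i : Fin m, Fin (n i) → ℝ))
    -- Fᵢ = { (x₁,…,x_m, yᵢ) : (x₁,…,x_{i−1}, yᵢ, x_{i+1},…,x_m) ∈ Y }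
    (F : ∀ j : Fin m, Set ((∀ i : Fin m, Fin (n i) → ℝ) × (Fin (n j) → ℝ)))
    (hF : ∀ j, F j = {q | Function.update q.1 j q.2 ∈ Y})
    -- G = { (x₁,…,x_m, y₁,…,y_m) : xᵢ = yᵢ ∀ i }
    (G : Set ((∀ i : Fin m, Fin (n i) → ℝ) × (∀ i : Fin m, Fin (n i) → ℝ)))
    (hG : G = {p | ∀ i, p.1 i = p.2 i})
    -- F̂ = { (x,y) : (x,yᵢ) ∈ Fᵢ ∀ i }
    (Fhat : Set ((∀ i : Fin m, Fin (n i) → ℝ) × (∀ i : Fin m, Fin (n i) → ℝ)))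
    (hFhat : Fhat = {p | ∀ i, (p.1, p.2 i) ∈ F i}) :
    -- Assumption 3 holds
    ∀ p ∈ Fhat ∩ G, ∀ j : Fin m, ∀ yj' : Fin (n j) → ℝ, (p.1, yj') ∈ F j →
      ∃ q ∈ Fhat ∩ G, (∀ i, i ≠ j → q.2 i = p.2 i) ∧ q.2 j = yj' := by
  intro p hp j yj' hyj'
  subst hG hFhat
  simp only [hF, Set.mem_setOf_eq] at *
  obtain ⟨hpF, hpG⟩ := hp
  set x' := Function.update p.1 j yj' with hx'
  have hx'Y : x' ∈ Y := hyj'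
  refine ⟨(x', x'), ⟨?_, fun i => rfl⟩, ?_, ?_⟩
  · intro i
    simp only [Set.mem_setOf_eq, Function.update_eq_self]
    exact hx'Y
  · intro i hij
    simp [hx', Function.update_of_ne hij, hpG i]
  · simp [hx']
end

section
/- Let Assumption 3 hold. Suppose (x, y) ∈ F̂ ∩ G and ε ≥ 0 satisfy Σ_i g_i(x, y_i) ≤ Σ_i g_i(x, y_i') + ε for all y' ∈ π₋₀(F̂ ∩ G). Then for every index j: g_j(x, y_j) ≤ g_j(x, y_j') + ε for all y_j' with (x, y_j') ∈ F_j; in particular g_j(x, y_j) ≤ g_j*(x) + ε. -/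
/-!
Moving from `y` to a unilateral deviation in the `j`-th block keeps the profile in
`π₋₀(F̂ ∩ G)` by Assumption 3, and changes the aggregate objective only in its `j`-th
summand; so the aggregate `ε`-optimality of `y` bounds the gain of player `j` by `ε`.
Taking the infimum over the deviations gives the bound by `g_j*(x) + ε`.
-/

theorem Fintype.sum_sub_sum_of_eq_off {ι M : Type*} [Fintype ι] [AddCommGroup M]
    {f h : ι → M} {j : ι} (hfh : ∀ i ≠ j, h i = f i) :
    ∑ i, h i - ∑ i, f i = h j - f j := by
  rw [← Finset.sum_sub_distrib]
  exact Fintype.sum_eq_single j fun i hi => sub_eq_zero.mpr (hfh i hi)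

theorem le_add_of_sum_le_sum_add_of_eq_off {ι : Type*} [Fintype ι] {Y : ι → Type*}
    {M : Type*} [AddCommGroup M] [PartialOrder M] [IsOrderedAddMonoid M]
    {c : ∀ i, Y i → M} {y y' : ∀ i, Y i} {ε : M} {j : ι}
    (hsum : ∑ i, c i (y i) ≤ ∑ i, c i (y' i) + ε) (hy' : ∀ i ≠ j, y' i = y i) :
    c j (y j) ≤ c j (y' j) + ε := by
  have hdiff := Fintype.sum_sub_sum_of_eq_off (f := fun i => c i (y' i))
    (h := fun i => c i (y i)) fun i hi => congrArg (c i) (hy' i hi).symm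
  calc c j (y j) = c j (y' j) + (∑ i, c i (y i) - ∑ i, c i (y' i)) := by
        rw [hdiff, add_sub_cancel]
    _ ≤ c j (y' j) + ε := add_le_add_right (sub_le_iff_le_add'.mpr hsum) _

theorem EReal.coe_le_iInf_add_coe {α : Sort*} {f : α → ℝ} {a ε : ℝ}
    (h : ∀ i, a ≤ f i + ε) : (a : EReal) ≤ (⨅ i, (f i : EReal)) + ε := by
  have hle : ((a - ε : ℝ) : EReal) ≤ ⨅ i, (f i : EReal) :=
    le_iInf fun i => EReal.coe_le_coe_iff.mpr (by linarith [h i])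
  calc (a : EReal) = ((a - ε : ℝ) : EReal) + ε := by rw [← EReal.coe_add, _root_.sub_add_cancel]
    _ ≤ (⨅ i, (f i : EReal)) + ε := add_le_add_left hle _

theorem eps_aggregate_implies_eps_individual_general
    (n₀ m : ℕ) (n : Fin m → ℕ)
    (F : ∀ i : Fin m, Set ((Fin n₀ → ℝ) × (Fin (n i) → ℝ)))
    (g : ∀ i : Fin m, (Fin n₀ → ℝ) → (Fin (n i) → ℝ) → ℝ)
    (G : Set ((Fin n₀ → ℝ) × (∀ i, Fin (n i) → ℝ)))
    (gstar : ∀ _ : Fin m, (Fin n₀ → ℝ) → EReal)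
    (hgstar : ∀ i x, gstar i x =
      ⨅ yi : {yi : Fin (n i) → ℝ // (x, yi) ∈ F i}, ((g i x yi.1 : ℝ) : EReal))
    (Fhat : Set ((Fin n₀ → ℝ) × (∀ i, Fin (n i) → ℝ)))
    -- Assumption 3
    (hA3 : ∀ p ∈ Fhat ∩ G, ∀ j : Fin m, ∀ yj' : Fin (n j) → ℝ, (p.1, yj') ∈ F j →
      ∃ q ∈ Fhat ∩ G, (∀ i, i ≠ j → q.2 i = p.2 i) ∧ q.2 j = yj')
    -- the point and tolerance
    (p : (Fin n₀ → ℝ) × (∀ i, Fin (n i) → ℝ))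
    (hp : p ∈ Fhat ∩ G)
    (ε : ℝ)
    (hmin : ∀ y' : ∀ i, Fin (n i) → ℝ, (∃ x', (x', y') ∈ Fhat ∩ G) →
      ∑ i, g i p.1 (p.2 i) ≤ (∑ i, g i p.1 (y' i)) + ε) :
    ∀ j : Fin m,
      (∀ yj' : Fin (n j) → ℝ, (p.1, yj') ∈ F j →
        g j p.1 (p.2 j) ≤ g j p.1 yj' + ε) ∧
      ((g j p.1 (p.2 j) : ℝ) : EReal) ≤ gstar j p.1 + (ε : ℝ) := by
  intro j
  have hdev : ∀ yj' : Fin (n j) → ℝ, (p.1, yj') ∈ F j →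
      g j p.1 (p.2 j) ≤ g j p.1 yj' + ε := by
    intro yj' hyj'
    obtain ⟨q, hq, hq_off, rfl⟩ := hA3 p hp j yj' hyj'
    exact le_add_of_sum_le_sum_add_of_eq_off (c := fun i => g i p.1) (hmin q.2 ⟨q.1, hq⟩) hq_off
  exact ⟨hdev, hgstar j p.1 ▸ EReal.coe_le_iInf_add_coe fun yi => hdev yi.1 yi.2⟩

theorem eps_aggregate_implies_eps_individual
    (n₀ m : ℕ) (n : Fin m → ℕ)
    (F : ∀ i : Fin m, Set ((Fin n₀ → ℝ) × (Fin (n i) → ℝ)))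
    (g : ∀ i : Fin m, (Fin n₀ → ℝ) → (Fin (n i) → ℝ) → ℝ)
    (G : Set ((Fin n₀ → ℝ) × (∀ i, Fin (n i) → ℝ)))
    (gstar : ∀ _ : Fin m, (Fin n₀ → ℝ) → EReal)
    (hgstar : ∀ i x, gstar i x =
      ⨅ yi : {yi : Fin (n i) → ℝ // (x, yi) ∈ F i}, ((g i x yi.1 : ℝ) : EReal))
    (Fhat : Set ((Fin n₀ → ℝ) × (∀ i, Fin (n i) → ℝ)))
    (hFhat : Fhat = {p | ∀ i, (p.1, p.2 i) ∈ F i})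
    -- Assumption 3
    (hA3 : ∀ p ∈ Fhat ∩ G, ∀ j : Fin m, ∀ yj' : Fin (n j) → ℝ, (p.1, yj') ∈ F j →
      ∃ q ∈ Fhat ∩ G, (∀ i, i ≠ j → q.2 i = p.2 i) ∧ q.2 j = yj')
    -- the point and tolerance
    (p : (Fin n₀ → ℝ) × (∀ i, Fin (n i) → ℝ))
    (hp : p ∈ Fhat ∩ G)
    (ε : ℝ) (hε : 0 ≤ ε)
    (hmin : ∀ y' : ∀ i, Fin (n i) → ℝ, (∃ x', (x', y') ∈ Fhat ∩ G) →
      ∑ i, g i p.1 (p.2 i) ≤ (∑ i, g i p.1 (y' i)) + ε) :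
    ∀ j : Fin m,
      (∀ yj' : Fin (n j) → ℝ, (p.1, yj') ∈ F j →
        g j p.1 (p.2 j) ≤ g j p.1 yj' + ε) ∧
      ((g j p.1 (p.2 j) : ℝ) : EReal) ≤ gstar j p.1 + (ε : ℝ) :=
  eps_aggregate_implies_eps_individual_general n₀ m n F g G gstar hgstar Fhat hA3 p hp ε hmin
end

section
/- Let F^L ⊆ π₋₀(F̂ ∩ G) and suppose (x, y, w) attains the infimum δ^L of the relaxed problem minimizing Σ_i g_i(x, y_i) − w over (x, y, w) with (x, y) ∈ F̂ ∩ G, w ∈ ℝ, and w ≤ Σ_i g_i(x, y_i') for all y' ∈ F^L. If additionally w ≤ g^N(x), then (x, y, w) is feasible for problem (MND), it attains the infimum of (MND), and δ^N = δ^L. (This certifies correctness of the termination test in the constraint-generation algorithm.) -/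
/-!
The relaxed problem only imposes the cuts indexed by `F^L ⊆ π₋₀(F̂ ∩ G)`, so its feasible set
contains that of (MND) and `δ^L ≤ δ^N`. The test `w ≤ g^N(x)` says that the relaxed optimum
satisfies every cut of (MND), hence is feasible for it; its value `δ^L` is then also an upper
bound for `δ^N`.
-/

theorem sInf_image_eq_of_mem_of_subset {α β : Type*} [CompleteLattice β] {f : α → β}
    {S R : Set α} (hSR : S ⊆ R) {q : α} (hqS : q ∈ S) (hqR : f q = sInf (f '' R)) :
    f q = sInf (f '' S) ∧ sInf (f '' S) = sInf (f '' R) := by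
  have hopt : f q = sInf (f '' S) :=
    le_antisymm (hqR ▸ sInf_le_sInf (Set.image_mono hSR)) (sInf_le (Set.mem_image_of_mem f hqS))
  exact ⟨hopt, hopt.symm.trans hqR⟩

theorem termination_test_correct_general
    (n₀ m : ℕ) (n : Fin m → ℕ)
    (g : ∀ i : Fin m, (Fin n₀ → ℝ) → (Fin (n i) → ℝ) → ℝ)
    (G : Set ((Fin n₀ → ℝ) × (∀ i, Fin (n i) → ℝ)))
    (Fhat : Set ((Fin n₀ → ℝ) × (∀ i, Fin (n i) → ℝ)))
    (gN : (Fin n₀ → ℝ) → EReal)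
    (hgN : ∀ x, gN x =
      ⨅ y' : {y' : ∀ i, Fin (n i) → ℝ // ∃ x', (x', y') ∈ Fhat ∩ G},
        ((∑ i, g i x (y'.1 i) : ℝ) : EReal))
    -- F^L ⊆ π₋₀(F̂ ∩ G)
    (FL : Set (∀ i, Fin (n i) → ℝ))
    (hFL : FL ⊆ {y' | ∃ x', (x', y') ∈ Fhat ∩ G})
    -- feasible sets of (MND) and of the relaxed problem, shared objective
    (MNDfeas : Set (((Fin n₀ → ℝ) × (∀ i, Fin (n i) → ℝ)) × ℝ))
    (hMNDfeas : MNDfeas = {q | q.1 ∈ Fhat ∩ G ∧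
      ∀ y' : ∀ i, Fin (n i) → ℝ, (∃ x', (x', y') ∈ Fhat ∩ G) →
        q.2 ≤ ∑ i, g i q.1.1 (y' i)})
    (Rfeas : Set (((Fin n₀ → ℝ) × (∀ i, Fin (n i) → ℝ)) × ℝ))
    (hRfeas : Rfeas = {q | q.1 ∈ Fhat ∩ G ∧
      ∀ y' ∈ FL, q.2 ≤ ∑ i, g i q.1.1 (y' i)})
    (obj : (((Fin n₀ → ℝ) × (∀ i, Fin (n i) → ℝ)) × ℝ) → EReal)
    (δN δL : EReal)
    (hδN : δN = sInf (obj '' MNDfeas))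
    (hδL : δL = sInf (obj '' Rfeas))
    -- (x,y,w) attains the infimum of the relaxed problem
    (q : ((Fin n₀ → ℝ) × (∀ i, Fin (n i) → ℝ)) × ℝ)
    (hq : q ∈ Rfeas)
    (hqopt : obj q = δL)
    -- termination test: w ≤ g^N(x)
    (hterm : ((q.2 : ℝ) : EReal) ≤ gN q.1.1) :
    q ∈ MNDfeas ∧ obj q = δN ∧ δN = δL := by
  have hcuts : ∀ y' : ∀ i, Fin (n i) → ℝ, (∃ x', (x', y') ∈ Fhat ∩ G) →
      q.2 ≤ ∑ i, g i q.1.1 (y' i) := fun y' hy' => by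
    exact_mod_cast hterm.trans ((hgN q.1.1).trans_le (iInf_le _ ⟨y', hy'⟩))
  have hmem : q ∈ MNDfeas := hMNDfeas ▸ ⟨(hRfeas ▸ hq).1, hcuts⟩
  have hsub : MNDfeas ⊆ Rfeas := by
    rw [hMNDfeas, hRfeas]
    exact fun r hr => ⟨hr.1, fun y' hy' => hr.2 y' (hFL hy')⟩
  obtain ⟨hopt, heq⟩ := sInf_image_eq_of_mem_of_subset hsub hmem (hqopt.trans hδL)
  exact ⟨hmem, hopt.trans hδN.symm, hδN.trans (heq.trans hδL.symm)⟩

theorem termination_test_correct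
    (n₀ m : ℕ) (n : Fin m → ℕ)
    (F : ∀ i : Fin m, Set ((Fin n₀ → ℝ) × (Fin (n i) → ℝ)))
    (g : ∀ i : Fin m, (Fin n₀ → ℝ) → (Fin (n i) → ℝ) → ℝ)
    (G : Set ((Fin n₀ → ℝ) × (∀ i, Fin (n i) → ℝ)))
    (Fhat : Set ((Fin n₀ → ℝ) × (∀ i, Fin (n i) → ℝ)))
    (hFhat : Fhat = {p | ∀ i, (p.1, p.2 i) ∈ F i})
    (gN : (Fin n₀ → ℝ) → EReal)
    (hgN : ∀ x, gN x =
      ⨅ y' : {y' : ∀ i, Fin (n i) → ℝ // ∃ x', (x', y') ∈ Fhat ∩ G},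
        ((∑ i, g i x (y'.1 i) : ℝ) : EReal))
    -- F^L ⊆ π₋₀(F̂ ∩ G)
    (FL : Set (∀ i, Fin (n i) → ℝ))
    (hFL : FL ⊆ {y' | ∃ x', (x', y') ∈ Fhat ∩ G})
    -- feasible sets of (MND) and of the relaxed problem, shared objective
    (MNDfeas : Set (((Fin n₀ → ℝ) × (∀ i, Fin (n i) → ℝ)) × ℝ))
    (hMNDfeas : MNDfeas = {q | q.1 ∈ Fhat ∩ G ∧
      ∀ y' : ∀ i, Fin (n i) → ℝ, (∃ x', (x', y') ∈ Fhat ∩ G) →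
        q.2 ≤ ∑ i, g i q.1.1 (y' i)})
    (Rfeas : Set (((Fin n₀ → ℝ) × (∀ i, Fin (n i) → ℝ)) × ℝ))
    (hRfeas : Rfeas = {q | q.1 ∈ Fhat ∩ G ∧
      ∀ y' ∈ FL, q.2 ≤ ∑ i, g i q.1.1 (y' i)})
    (obj : (((Fin n₀ → ℝ) × (∀ i, Fin (n i) → ℝ)) × ℝ) → EReal)
    (hobj : ∀ q, obj q = (((∑ i, g i q.1.1 (q.1.2 i)) - q.2 : ℝ) : EReal))
    (δN δL : EReal)
    (hδN : δN = sInf (obj '' MNDfeas))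
    (hδL : δL = sInf (obj '' Rfeas))
    -- (x,y,w) attains the infimum of the relaxed problem
    (q : ((Fin n₀ → ℝ) × (∀ i, Fin (n i) → ℝ)) × ℝ)
    (hq : q ∈ Rfeas)
    (hqopt : obj q = δL)
    -- termination test: w ≤ g^N(x)
    (hterm : ((q.2 : ℝ) : EReal) ≤ gN q.1.1) :
    q ∈ MNDfeas ∧ obj q = δN ∧ δN = δL :=
  termination_test_correct_general n₀ m n g G Fhat gN hgN FL hFL MNDfeas hMNDfeas Rfeas hRfeas obj
    δN δL hδN hδL q hq hqopt hterm
end
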